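/- arXiv:1902.01429 — 4 statements merged into one kernel-verified Lean document; each statement's English description precedes it below -/
import Mathlib

section
/- Substituting the optimal values W* = (1/T) Σ_t y_t x_t^T, M* = (1/T) Σ_t y_t y_t^T, and b* = (α/T) Σ_t y_t into the min-max objective (1/T) Σ_t [Tr(W^T W) - (1/2) Tr(M^T M) - ‖b‖₂² - 2 y_t^T(W x_t - α b) + y_t^T M y_t + 2λ₁‖y_t‖₁ + λ₂‖y_t‖₂²] yields, up to the additive constant -(1/(2T²)) Σ_{t,t'} (x_t^T x_{t'})² - α⁴/2 (after expanding the square), a quantity equal to the original NSM cost (1/(2T²)) Σ_{t,t'} (x_t^T x_{t'} - y_t^T y_{t'} - α²)² + (2λ₁/T) Σ_t ‖y_t‖₁ + (λ₂/T) Σ_t ‖y_t‖₂². -/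
open Finset Matrix

/-! With the Gram matrices `G t s = y t ⬝ᵥ y s` and `K t s = x t ⬝ᵥ x s`, every quadratic term
of the objective at the optimum is a Gram pairing: `Tr (W*ᵀ W*) = T⁻² ∑ G K`,
`Tr (M*ᵀ M*) = T⁻² ∑ G²`, `‖b*‖² = α² T⁻² ∑ G`, and the terms linear in `y t` average to twice
these. So the objective is `T⁻² ∑ (G² / 2 - G K + α² G)` plus the regularisers, which is the
expansion of `(1 / (2 T²)) ∑ ((K - G - α²)² - (K - α²)²)`. -/

theorem Matrix.trace_transpose_mul_self_eq_sum_sq {m n R : Type*} [Fintype m] [Fintype n]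
    [CommSemiring R] (A : Matrix m n R) :
    (Aᵀ * A).trace = ∑ i, ∑ j, A i j ^ 2 := by
  simp only [trace, diag_apply, mul_apply, transpose_apply, ← sq]
  exact sum_comm

section GramPairing

variable {ι m n : Type*} [Fintype ι] [Fintype m] [Fintype n]

theorem sum_sum_mul_sum_mul_eq_gram_pairing {c : ℝ} {u : ι → m → ℝ} {v : ι → n → ℝ}
    {A : Matrix m n ℝ} (hA : ∀ i j, A i j = c * ∑ s, u s i * v s j) :
    ∑ t, ∑ i, u t i * ∑ j, A i j * v t j = c * ∑ t, ∑ s, (u t ⬝ᵥ u s) * (v t ⬝ᵥ v s) := by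
  simp only [hA, dotProduct, sum_mul_sum]
  simp only [mul_sum, sum_mul]
  refine sum_congr rfl fun t _ => ?_
  rw [sum_comm_cycle]
  exact sum_congr rfl fun s _ => sum_congr rfl fun i _ => sum_congr rfl fun j _ => by ring

theorem sum_sum_sq_eq_gram_pairing {c : ℝ} {u : ι → m → ℝ} {v : ι → n → ℝ}
    {A : Matrix m n ℝ} (hA : ∀ i j, A i j = c * ∑ s, u s i * v s j) :
    ∑ i, ∑ j, A i j ^ 2 = c ^ 2 * ∑ t, ∑ s, (u t ⬝ᵥ u s) * (v t ⬝ᵥ v s) := by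
  calc ∑ i, ∑ j, A i j ^ 2 = c * ∑ t, ∑ i, u t i * ∑ j, A i j * v t j := by
        conv_lhs => enter [2, i, 2, j]; rw [sq]; enter [2]; rw [hA]
        simp only [mul_sum]
        rw [sum_comm_cycle]
        refine sum_congr rfl fun t _ => sum_congr rfl fun i _ => sum_congr rfl fun j _ => by ring
    _ = _ := by rw [sum_sum_mul_sum_mul_eq_gram_pairing hA, ← mul_assoc, sq]

theorem sum_mul_eq_gram_sum {c : ℝ} {u : ι → m → ℝ} {b : m → ℝ}
    (hb : ∀ i, b i = c * ∑ s, u s i) :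
    ∑ t, ∑ i, u t i * b i = c * ∑ t, ∑ s, u t ⬝ᵥ u s := by
  simp only [hb, dotProduct, mul_sum]
  refine sum_congr rfl fun t _ => ?_
  rw [sum_comm]
  exact sum_congr rfl fun s _ => sum_congr rfl fun i _ => by ring

theorem sum_sq_eq_gram_sum {c : ℝ} {u : ι → m → ℝ} {b : m → ℝ}
    (hb : ∀ i, b i = c * ∑ s, u s i) :
    ∑ i, b i ^ 2 = c ^ 2 * ∑ t, ∑ s, u t ⬝ᵥ u s := by
  calc ∑ i, b i ^ 2 = c * ∑ t, ∑ i, u t i * b i := by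
        conv_lhs => enter [2, i]; rw [sq]; enter [2]; rw [hb]
        simp only [mul_sum]
        rw [sum_comm]
        exact sum_congr rfl fun t _ => sum_congr rfl fun i _ => by ring
    _ = _ := by rw [sum_mul_eq_gram_sum hb, ← mul_assoc, sq]

end GramPairing

theorem nsm_substitution_identity_general
    (n k T : ℕ) (α lam1 lam2 : ℝ)
    (x : Fin T → Fin n → ℝ) (y : Fin T → Fin k → ℝ)
    (Wstar : Matrix (Fin k) (Fin n) ℝ) (Mstar : Matrix (Fin k) (Fin k) ℝ)
    (bstar : Fin k → ℝ)
    (hW : ∀ i j, Wstar i j = (1 / (T : ℝ)) * ∑ t, y t i * x t j)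
    (hM : ∀ i j, Mstar i j = (1 / (T : ℝ)) * ∑ t, y t i * y t j)
    (hb : ∀ i, bstar i = (α / (T : ℝ)) * ∑ t, y t i)
    (L C : ℝ)
    (hL : L = (1 / (T : ℝ)) * ∑ t,
        ((Wstarᵀ * Wstar).trace - (1 / 2) * (Mstarᵀ * Mstar).trace
          - ∑ i, (bstar i) ^ 2
          - 2 * ∑ i, y t i * ((∑ j, Wstar i j * x t j) - α * bstar i)
          + (∑ i, y t i * ∑ j, Mstar i j * y t j)
          + 2 * lam1 * ∑ i, |y t i| + lam2 * ∑ i, (y t i) ^ 2))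
    (hC : C = (1 / (2 * (T : ℝ) ^ 2)) * ∑ t, ∑ t',
          ((∑ j, x t j * x t' j) - (∑ i, y t i * y t' i) - α ^ 2) ^ 2
        + (2 * lam1 / (T : ℝ)) * ∑ t, ∑ i, |y t i|
        + (lam2 / (T : ℝ)) * ∑ t, ∑ i, (y t i) ^ 2) :
    L = C - (1 / (2 * (T : ℝ) ^ 2)) * ∑ t, ∑ t',
          ((∑ j, x t j * x t' j) - α ^ 2) ^ 2 := by
  have hαb : ∀ i, α * bstar i = (α ^ 2 / (T : ℝ)) * ∑ t, y t i := by
    intro i; rw [hb]; ring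
  have hTinv : (T : ℝ) * (1 / T) ^ 2 = 1 / T := by
    rcases eq_or_ne (T : ℝ) 0 with h | h
    · simp [h]
    · field_simp
  set Pyx := ∑ t, ∑ s, (y t ⬝ᵥ y s) * (x t ⬝ᵥ x s)
  set Pyy := ∑ t, ∑ s, (y t ⬝ᵥ y s) * (y t ⬝ᵥ y s)
  set Py := ∑ t, ∑ s, y t ⬝ᵥ y s
  have hcost : ∑ t, ∑ t', ((∑ j, x t j * x t' j) - (∑ i, y t i * y t' i) - α ^ 2) ^ 2
      = ∑ t, ∑ t', ((∑ j, x t j * x t' j) - α ^ 2) ^ 2 + Pyy - 2 * Pyx + 2 * α ^ 2 * Py := by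
    simp only [Pyx, Pyy, Py, mul_sum, ← sum_add_distrib, ← sum_sub_distrib]
    exact sum_congr rfl fun t _ => sum_congr rfl fun s _ => by simp only [dotProduct]; ring
  rw [hL, hC, hcost]
  simp only [mul_sub, sum_sub_distrib, sum_add_distrib, sum_const, card_univ, Fintype.card_fin,
    nsmul_eq_mul, ← mul_sum]
  rw [trace_transpose_mul_self_eq_sum_sq, trace_transpose_mul_self_eq_sum_sq,
    sum_sum_sq_eq_gram_pairing hW, sum_sum_sq_eq_gram_pairing hM, sum_sq_eq_gram_sum hb,
    sum_sum_mul_sum_mul_eq_gram_pairing hW, sum_sum_mul_sum_mul_eq_gram_pairing hM,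
    sum_mul_eq_gram_sum hαb]
  linear_combination (1 / (T : ℝ)) * (Pyx - Pyy / 2 - α ^ 2 * Py) * hTinv

/-- Substituting the optimal `W* = (1/T) Σ_t y_t x_tᵀ`,
`M* = (1/T) Σ_t y_t y_tᵀ`, `b* = (α/T) Σ_t y_t` into the min-max objective yields the
original NSM cost up to an additive constant independent of `y`, namely
`-(1/(2T²)) Σ_{t,t'} (x_tᵀx_{t'} - α²)²`
(which expands to `-(1/(2T²)) Σ_{t,t'} (x_tᵀx_{t'})² - α⁴/2` plus a cross term). -/
theorem nsm_substitution_identity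
    (n k T : ℕ) (hT : 0 < T) (α lam1 lam2 : ℝ)
    (hα : 0 ≤ α) (hlam1 : 0 ≤ lam1) (hlam2 : 0 ≤ lam2)
    (x : Fin T → Fin n → ℝ) (y : Fin T → Fin k → ℝ)
    (Wstar : Matrix (Fin k) (Fin n) ℝ) (Mstar : Matrix (Fin k) (Fin k) ℝ)
    (bstar : Fin k → ℝ)
    (hW : ∀ i j, Wstar i j = (1 / (T : ℝ)) * ∑ t, y t i * x t j)
    (hM : ∀ i j, Mstar i j = (1 / (T : ℝ)) * ∑ t, y t i * y t j)
    (hb : ∀ i, bstar i = (α / (T : ℝ)) * ∑ t, y t i)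
    (L C : ℝ)
    (hL : L = (1 / (T : ℝ)) * ∑ t,
        ((Wstarᵀ * Wstar).trace - (1 / 2) * (Mstarᵀ * Mstar).trace
          - ∑ i, (bstar i) ^ 2
          - 2 * ∑ i, y t i * ((∑ j, Wstar i j * x t j) - α * bstar i)
          + (∑ i, y t i * ∑ j, Mstar i j * y t j)
          + 2 * lam1 * ∑ i, |y t i| + lam2 * ∑ i, (y t i) ^ 2))
    (hC : C = (1 / (2 * (T : ℝ) ^ 2)) * ∑ t, ∑ t',
          ((∑ j, x t j * x t' j) - (∑ i, y t i * y t' i) - α ^ 2) ^ 2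
        + (2 * lam1 / (T : ℝ)) * ∑ t, ∑ i, |y t i|
        + (lam2 / (T : ℝ)) * ∑ t, ∑ i, (y t i) ^ 2) :
    L = C - (1 / (2 * (T : ℝ) ^ 2)) * ∑ t, ∑ t',
          ((∑ j, x t j * x t' j) - α ^ 2) ^ 2 :=
  nsm_substitution_identity_general n k T α lam1 lam2 x y Wstar Mstar bstar hW hM hb L C hL hC
end

section
/- Let M ∈ R^{k×k} be symmetric with M_ii + λ₂ > 0 for all i, and let h(y) = -2 y^T c + y^T M y + 2λ₁‖y‖₁ + λ₂‖y‖₂² for y ≥ 0 (componentwise). Then a point y* ≥ 0 is a KKT point of the minimization of h over the nonnegative orthant if and only if for every i, y*_i = g_i(u*_i) where u*_i = c_i - [ (M - diag(M)) y* ]_i and g_i(u) = max(u - λ₁, 0)/(λ₂ + M_ii). In particular, fixed points of the neural dynamics correspond to KKT points of h. -/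
open Finset Matrix

/-! Coordinatewise, half the KKT expression is `(λ₂ + M_ii) yᵢ - (uᵢ - λ₁)`: the diagonal term
`M_ii yᵢ` of `(M y)ᵢ` joins `λ₂ yᵢ`, and the off-diagonal part is what enters `uᵢ`. The KKT
conditions at `i` are then the complementarity conditions `a y ≥ v`, `y > 0 → a y = v` with
`a > 0`, whose unique nonnegative solution is `y = max v 0 / a`. -/

theorem complementarity_iff_eq_max_div {a v y : ℝ} (ha : 0 < a) (hy : 0 ≤ y) :
    (0 ≤ a * y - v ∧ (0 < y → a * y - v = 0)) ↔ y = max v 0 / a := by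
  constructor
  · rintro ⟨hge, hcomp⟩
    rcases hy.eq_or_lt with rfl | hpos
    · rw [max_eq_right (by linarith), zero_div]
    · have hv : a * y = v := by linarith [hcomp hpos]
      rw [max_eq_left (hv ▸ (mul_pos ha hpos).le), ← hv, mul_div_cancel_left₀ y ha.ne']
  · rintro rfl
    rcases le_total v 0 with hv | hv
    · simp only [max_eq_right hv, zero_div, mul_zero, lt_irrefl, IsEmpty.forall_iff, and_true]
      linarith
    · rw [max_eq_left hv, mul_div_cancel₀ v ha.ne', sub_self]
      exact ⟨le_rfl, fun _ => rfl⟩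

theorem Matrix.mulVec_apply_eq_diag_add_sum_sdiff {n R : Type*} [Fintype n] [DecidableEq n]
    [NonUnitalNonAssocSemiring R] (M : Matrix n n R) (y : n → R) (i : n) :
    (M *ᵥ y) i = M i i * y i + ∑ j ∈ univ \ {i}, M i j * y j := by
  rw [mulVec, dotProduct, ← add_sum_erase _ _ (mem_univ i), sdiff_singleton_eq_erase]

theorem kkt_iff_fixed_point_general
    (k : ℕ) (c : Fin k → ℝ) (lam1 lam2 : ℝ)
    (M : Matrix (Fin k) (Fin k) ℝ)
    (hdiag : ∀ i, 0 < lam2 + M i i)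
    (ystar : Fin k → ℝ) (hy : ∀ i, 0 ≤ ystar i) :
    -- KKT conditions for minimizing h over {y ≥ 0}
    (∀ i, 0 ≤ -2 * c i + 2 * (M.mulVec ystar) i + 2 * lam2 * ystar i + 2 * lam1 ∧
        (0 < ystar i →
          -2 * c i + 2 * (M.mulVec ystar) i + 2 * lam2 * ystar i + 2 * lam1 = 0))
      ↔
    -- fixed point of the neural dynamics: y*_i = g_i(u*_i)
    (∀ i, ystar i =
        max ((c i - ∑ j ∈ univ \ {i}, M i j * ystar j) - lam1) 0 / (lam2 + M i i)) := by
  refine forall_congr' fun i => ?_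
  have hkkt : -2 * c i + 2 * (M *ᵥ ystar) i + 2 * lam2 * ystar i + 2 * lam1 =
      2 * ((lam2 + M i i) * ystar i - ((c i - ∑ j ∈ univ \ {i}, M i j * ystar j) - lam1)) := by
    rw [M.mulVec_apply_eq_diag_add_sum_sdiff]
    ring
  rw [hkkt, ← complementarity_iff_eq_max_div (hdiag i) (hy i),
    mul_nonneg_iff_of_pos_left two_pos, mul_eq_zero, or_iff_right two_ne_zero]

/-- For `h(y) = -2 yᵀc + yᵀMy + 2λ₁‖y‖₁ + λ₂‖y‖₂²` minimized over the
nonnegative orthant, a point `y* ≥ 0` is a KKT point iff for every `i`,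
`y*_i = g_i(u*_i)` with `u*_i = c_i - [(M - diag M) y*]_i` and
`g_i(u) = max(u - λ₁, 0)/(λ₂ + M_ii)`; i.e. fixed points of the neural dynamics
correspond to KKT points of `h`. -/
theorem kkt_iff_fixed_point
    (k : ℕ) (c : Fin k → ℝ) (lam1 lam2 : ℝ)
    (hlam1 : 0 ≤ lam1) (hlam2 : 0 ≤ lam2)
    (M : Matrix (Fin k) (Fin k) ℝ) (hMsymm : Mᵀ = M)
    (hdiag : ∀ i, 0 < lam2 + M i i)
    (ystar : Fin k → ℝ) (hy : ∀ i, 0 ≤ ystar i) :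
    -- KKT conditions for minimizing h over {y ≥ 0}
    (∀ i, 0 ≤ -2 * c i + 2 * (M.mulVec ystar) i + 2 * lam2 * ystar i + 2 * lam1 ∧
        (0 < ystar i →
          -2 * c i + 2 * (M.mulVec ystar) i + 2 * lam2 * ystar i + 2 * lam1 = 0))
      ↔
    -- fixed point of the neural dynamics: y*_i = g_i(u*_i)
    (∀ i, ystar i =
        max ((c i - ∑ j ∈ univ \ {i}, M i j * ystar j) - lam1) 0 / (lam2 + M i i)) :=
  kkt_iff_fixed_point_general k c lam1 lam2 M hdiag ystar hy
end

section
/- Along trajectories of the dynamics du_i/dτ = -u_i + c_i - (M̄ g(u))_i with output y_i = g_i(u_i) = max(u_i - λ₁, 0)/(λ₂ + M_ii), the objective h(y(τ)) = -2 y^T c + y^T M y + 2λ₁‖y‖₁ + λ₂‖y‖₂² is nonincreasing: dh(y(τ))/dτ ≤ 0. -/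
open Finset Matrix

/-!
Write `y = g(u)` and `v = -u + c - M̄ y` for the velocity of `u`. On the nonnegative orthant,
where `y` lives, `‖y‖₁ = ∑ i, y i` and `h` is smooth with gradient `2 (M y + λ₂ y + λ₁ - c)`.
For an active coordinate (`u_i > λ₁`) we have `(λ₂ + M_ii) y_i = u_i - λ₁`, which turns the
`i`-th gradient entry into `-2 v_i`, while `ẏ_i = v_i / (λ₂ + M_ii)`; an inactive coordinate
has `ẏ_i = 0`. Hence `dh/dτ = -2 ∑_{active} v_i² / (λ₂ + M_ii) ≤ 0`.
-/

theorem HasDerivAt.max_sub_const_zero {f : ℝ → ℝ} {f' x a : ℝ} (hf : HasDerivAt f f' x)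
    (hx : f x ≠ a) : HasDerivAt (fun t => max (f t - a) 0) (if a < f x then f' else 0) x := by
  rcases hx.lt_or_gt with hlt | hgt
  · rw [if_neg hlt.not_gt]
    refine (hasDerivAt_const x 0).congr_of_eventuallyEq ?_
    filter_upwards [hf.continuousAt.eventually_lt_const hlt] with t ht
    exact max_eq_right (by linarith)
  · rw [if_pos hgt]
    refine (hf.sub_const a).congr_of_eventuallyEq ?_
    filter_upwards [hf.continuousAt.eventually_const_lt hgt] with t ht
    exact max_eq_left (by linarith)

section Curves

variable {n : Type*} [Fintype n] {y z : ℝ → n → ℝ} {y' z' : n → ℝ} {t : ℝ}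

theorem HasDerivAt.dotProduct (hy : HasDerivAt y y' t) (hz : HasDerivAt z z' t) :
    HasDerivAt (fun s => y s ⬝ᵥ z s) (y' ⬝ᵥ z t + y t ⬝ᵥ z') t := by
  rw [hasDerivAt_pi] at hy hz
  simp only [_root_.dotProduct, ← Finset.sum_add_distrib]
  exact HasDerivAt.fun_sum fun i _ => (hy i).mul (hz i)

theorem HasDerivAt.mulVec {m : Type*} [Fintype m] (M : Matrix m n ℝ) (hy : HasDerivAt y y' t) :
    HasDerivAt (fun s => M *ᵥ y s) (M *ᵥ y') t :=
  hasDerivAt_pi.2 fun i => by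
    simpa [Matrix.mulVec] using (hasDerivAt_const t (fun j => M i j)).dotProduct hy

theorem HasDerivAt.dotProduct_mulVec_self {M : Matrix n n ℝ} (hM : Mᵀ = M)
    (hy : HasDerivAt y y' t) :
    HasDerivAt (fun s => y s ⬝ᵥ M *ᵥ y s) (2 * (y' ⬝ᵥ M *ᵥ y t)) t := by
  have hswap : y t ⬝ᵥ M *ᵥ y' = y' ⬝ᵥ M *ᵥ y t := by
    rw [dotProduct_mulVec, ← mulVec_transpose, hM, dotProduct_comm]
  convert hy.dotProduct (hy.mulVec M) using 1
  rw [hswap]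
  ring

/-- The objective `h` on the nonnegative orthant, where `‖y‖₁ = ∑ i, y i`. -/
def smoothObjective (c : n → ℝ) (lam1 lam2 : ℝ) (M : Matrix n n ℝ) (y : n → ℝ) : ℝ :=
  -2 * (y ⬝ᵥ c) + y ⬝ᵥ M *ᵥ y + 2 * lam1 * ∑ i, y i + lam2 * (y ⬝ᵥ y)

theorem HasDerivAt.smoothObjective (c : n → ℝ) (lam1 lam2 : ℝ) {M : Matrix n n ℝ} (hM : Mᵀ = M)
    (hy : HasDerivAt y y' t) :
    HasDerivAt (fun s => _root_.smoothObjective c lam1 lam2 M (y s))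
      (∑ i, y' i * (2 * ((M *ᵥ y t) i + lam2 * y t i + lam1 - c i))) t := by
  have hsum : HasDerivAt (fun s => ∑ i, y s i) (∑ i, y' i) t :=
    HasDerivAt.fun_sum fun i _ => hasDerivAt_pi.1 hy i
  refine ((((hy.dotProduct (hasDerivAt_const t c)).const_mul (-2)).add
    (hy.dotProduct_mulVec_self hM)).add (hsum.const_mul (2 * lam1))).add
    ((hy.dotProduct hy).const_mul lam2) |>.congr_deriv ?_
  simp only [_root_.dotProduct, Pi.zero_apply, mul_zero, sum_const_zero, add_zero, mul_sum,
    ← sum_add_distrib]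
  exact sum_congr rfl fun i _ => by ring

end Curves

theorem relu_velocity_mul_gradient_nonpos {n : Type*} [Fintype n] [DecidableEq n]
    (M : Matrix n n ℝ) (c y : n → ℝ) (lam1 lam2 u v : ℝ) (i : n) (hd : 0 < lam2 + M i i)
    (hy : y i = max (u - lam1) 0 / (lam2 + M i i))
    (hv : v = -u + c i - ∑ j ∈ univ \ {i}, M i j * y j) :
    (if lam1 < u then v else 0) / (lam2 + M i i) * (2 * ((M *ᵥ y) i + lam2 * y i + lam1 - c i))
      ≤ 0 := by
  split_ifs with hu
  · have hyi : (lam2 + M i i) * y i = u - lam1 := by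
      rw [hy, max_eq_left (by linarith)]
      field_simp
    have hgrad : (M *ᵥ y) i + lam2 * y i + lam1 - c i = -v := by
      rw [mulVec, _root_.dotProduct, sum_eq_sum_sdiff_singleton_add (mem_univ i)]
      linarith
    rw [hgrad, show v / (lam2 + M i i) * (2 * -v) = -(2 * v ^ 2 / (lam2 + M i i)) by ring]
    exact neg_nonpos.2 (by positivity)
  · simp

theorem objective_nonincreasing_along_dynamics_general
    (k : ℕ) (c : Fin k → ℝ) (lam1 lam2 : ℝ)
    (M : Matrix (Fin k) (Fin k) ℝ) (hMsymm : Mᵀ = M)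
    (hdiag : ∀ i, 0 < lam2 + M i i)
    (g : Fin k → ℝ → ℝ)
    (hg : ∀ i v, g i v = max (v - lam1) 0 / (lam2 + M i i))
    (h : (Fin k → ℝ) → ℝ)
    (hh : ∀ y, h y = -2 * (∑ i, y i * c i) + (∑ i, y i * ∑ j, M i j * y j)
        + 2 * lam1 * (∑ i, |y i|) + lam2 * (∑ i, (y i) ^ 2))
    (u : ℝ → Fin k → ℝ) (τ₀ : ℝ)
    (hdyn : ∀ τ : ℝ, ∀ i, HasDerivAt (fun s => u s i)
        (-u τ i + c i - ∑ j ∈ univ \ {i}, M i j * g j (u τ j)) τ)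
    (hne : ∀ i, u τ₀ i ≠ lam1) :
    ∃ d : ℝ, d ≤ 0 ∧ HasDerivAt (fun τ => h (fun i => g i (u τ i))) d τ₀ := by
  let y : ℝ → Fin k → ℝ := fun τ i => g i (u τ i)
  let v : Fin k → ℝ := fun i => -u τ₀ i + c i - ∑ j ∈ univ \ {i}, M i j * y τ₀ j
  have hy : HasDerivAt y (fun i => (if lam1 < u τ₀ i then v i else 0) / (lam2 + M i i)) τ₀ :=
    hasDerivAt_pi.2 fun i => (((hdyn τ₀ i).max_sub_const_zero (hne i)).div_const
      (lam2 + M i i)).congr_of_eventuallyEq (.of_forall fun s => hg i (u s i))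
  have hy_nonneg (τ : ℝ) (i : Fin k) : 0 ≤ y τ i := by
    simp only [y, hg]
    exact div_nonneg (le_max_right _ _) (hdiag i).le
  have hh_y (τ : ℝ) : h (y τ) = smoothObjective c lam1 lam2 M (y τ) := by
    simp only [hh, smoothObjective, abs_of_nonneg (hy_nonneg τ _), sq]
    rfl
  refine ⟨_, sum_nonpos fun i _ => ?_,
    (hy.smoothObjective c lam1 lam2 hMsymm).congr_of_eventuallyEq (.of_forall hh_y)⟩
  exact relu_velocity_mul_gradient_nonpos M c (y τ₀) lam1 lam2 (u τ₀ i) (v i) i (hdiag i)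
    (hg _ _) rfl

/-- Along trajectories of `du_i/dτ = -u_i + c_i - (M̄ g(u))_i` with output
`y_i = g_i(u_i) = max(u_i - λ₁, 0)/(λ₂ + M_ii)`, the objective
`h(y) = -2 yᵀc + yᵀMy + 2λ₁‖y‖₁ + λ₂‖y‖₂²` is nonincreasing: at a time `τ₀` where no
`u_i` equals `λ₁`, `h(y(τ))` is differentiable with nonpositive derivative. -/
theorem objective_nonincreasing_along_dynamics
    (k : ℕ) (c : Fin k → ℝ) (lam1 lam2 : ℝ)
    (hlam1 : 0 ≤ lam1) (hlam2 : 0 ≤ lam2)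
    (M : Matrix (Fin k) (Fin k) ℝ) (hMsymm : Mᵀ = M)
    (hdiag : ∀ i, 0 < lam2 + M i i)
    (g : Fin k → ℝ → ℝ)
    (hg : ∀ i v, g i v = max (v - lam1) 0 / (lam2 + M i i))
    (h : (Fin k → ℝ) → ℝ)
    (hh : ∀ y, h y = -2 * (∑ i, y i * c i) + (∑ i, y i * ∑ j, M i j * y j)
        + 2 * lam1 * (∑ i, |y i|) + lam2 * (∑ i, (y i) ^ 2))
    (u : ℝ → Fin k → ℝ) (τ₀ : ℝ)
    (hdyn : ∀ τ : ℝ, ∀ i, HasDerivAt (fun s => u s i)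
        (-u τ i + c i - ∑ j ∈ univ \ {i}, M i j * g j (u τ j)) τ)
    (hne : ∀ i, u τ₀ i ≠ lam1) :
    ∃ d : ℝ, d ≤ 0 ∧ HasDerivAt (fun τ => h (fun i => g i (u τ i))) d τ₀ :=
  objective_nonincreasing_along_dynamics_general k c lam1 lam2 M hMsymm hdiag g hg h hh u τ₀ hdyn
    hne
end

section
/- Suppose the time-averaged spike trains ỹ_i(τ) = N_i(τ)/τ of the spiking network converge to limits y*_i ≥ 0 as τ → ∞, and the averaged input currents converge accordingly, so that y* satisfies: for each i, either y*_i = 0 and c_i - (M̄ y*)_i - λ₁ ≤ 0, or y*_i > 0 and y*_i = (c_i - (M̄ y*)_i - λ₁)/(λ₂ + M_ii). If M + λ₂ I is positive definite, then y* is the unique global minimizer of h(y) = -2 y^T c + y^T M y + 2λ₁‖y‖₁ + λ₂‖y‖₂² over the nonnegative orthant. -/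
/-!
On the nonnegative orthant `‖y‖₁ = ∑ yᵢ`, so `h y = yᵀ A y - 2 yᵀ s` with `A = M + λ₂ I` and
`s = c - λ₁ 𝟙`. The diagonal entries `λ₂ + M_ii` of the positive definite `A` are positive, and
the fixed-point conditions on `y*` then say exactly `s ≤ A y*` and `y*ᵢ (A y* - s)ᵢ = 0`: the
KKT conditions of this quadratic program. Expanding around `y*`,
`h y - h y* = (y - y*)ᵀ A (y - y*) + 2 yᵀ (A y* - s)`, a positive definite term plus a
nonnegative one, so `h y > h y*` unless `y = y*`.
-/

open Finset Matrix

section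

variable {n : Type*} [Fintype n]

theorem Matrix.IsSymm.dotProduct_mulVec_comm {A : Matrix n n ℝ} (hA : A.IsSymm) (x y : n → ℝ) :
    x ⬝ᵥ A *ᵥ y = y ⬝ᵥ A *ᵥ x := by
  rw [dotProduct_mulVec, dotProduct_comm, ← vecMul_transpose, hA.eq]

theorem Matrix.IsSymm.quadratic_sub_quadratic {A : Matrix n n ℝ} (hA : A.IsSymm) (s x y : n → ℝ) :
    (y ⬝ᵥ A *ᵥ y - 2 * (y ⬝ᵥ s)) - (x ⬝ᵥ A *ᵥ x - 2 * (x ⬝ᵥ s)) =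
      (y - x) ⬝ᵥ A *ᵥ (y - x) + 2 * ((y - x) ⬝ᵥ (A *ᵥ x - s)) := by
  simp only [mulVec_sub, dotProduct_sub, sub_dotProduct, hA.dotProduct_mulVec_comm x y]
  ring

theorem Matrix.PosDef.quadratic_lt_of_complementarity {A : Matrix n n ℝ} (hA : A.PosDef)
    {s x : n → ℝ} (hfeas : s ≤ A *ᵥ x) (hcomp : x ⬝ᵥ (A *ᵥ x - s) = 0)
    {y : n → ℝ} (hy : 0 ≤ y) (hyx : y ≠ x) :
    x ⬝ᵥ A *ᵥ x - 2 * (x ⬝ᵥ s) < y ⬝ᵥ A *ᵥ y - 2 * (y ⬝ᵥ s) := by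
  have hsymm : A.IsSymm := isHermitian_iff_isSymm.mp hA.isHermitian
  have hquad : 0 < (y - x) ⬝ᵥ A *ᵥ (y - x) := by
    simpa using hA.dotProduct_mulVec_pos (sub_ne_zero.mpr hyx)
  have hlin : 0 ≤ y ⬝ᵥ (A *ᵥ x - s) :=
    sum_nonneg fun i _ => mul_nonneg (hy i) (sub_nonneg.mpr (hfeas i))
  have hexp := hsymm.quadratic_sub_quadratic s x y
  rw [sub_dotProduct y x (A *ᵥ x - s), hcomp] at hexp
  linarith

end

theorem Matrix.add_smul_one_mulVec_apply {n : Type*} [Fintype n] [DecidableEq n]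
    (M : Matrix n n ℝ) (a : ℝ) (x : n → ℝ) (i : n) :
    ((M + a • 1) *ᵥ x) i = ∑ j ∈ univ \ {i}, M i j * x j + (a + M i i) * x i := by
  rw [add_mulVec, smul_mulVec, one_mulVec, Pi.add_apply, Pi.smul_apply, mulVec,
    dotProduct, ← add_sum_erase _ _ (mem_univ i), erase_eq, smul_eq_mul]
  ring

theorem le_and_mul_eq_zero_of_fixed_point {x c r l d : ℝ} (hd : 0 < d)
    (h : (x = 0 ∧ c - r - l ≤ 0) ∨ (0 < x ∧ x = (c - r - l) / d)) :
    c - l ≤ r + d * x ∧ x * (r + d * x - (c - l)) = 0 := by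
  rcases h with ⟨rfl, hle⟩ | ⟨-, rfl⟩
  · exact ⟨by linarith, by ring⟩
  · rw [mul_div_cancel₀ _ hd.ne']
    exact ⟨by linarith, by ring⟩

theorem elastic_net_objective_eq_of_nonneg {n : Type*} [Fintype n] [DecidableEq n]
    (c : n → ℝ) (lam1 lam2 : ℝ) (M : Matrix n n ℝ) {y : n → ℝ} (hy : 0 ≤ y) :
    -2 * (∑ i, y i * c i) + (∑ i, y i * ∑ j, M i j * y j)
        + 2 * lam1 * (∑ i, |y i|) + lam2 * (∑ i, (y i) ^ 2) =
      y ⬝ᵥ (M + lam2 • 1) *ᵥ y - 2 * (y ⬝ᵥ (c - fun _ => lam1)) := by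
  rw [add_mulVec, smul_mulVec, one_mulVec, dotProduct_add, dotProduct_smul, dotProduct_sub,
    smul_eq_mul]
  simp only [dotProduct, mulVec, abs_of_nonneg (hy _), sq, mul_sub, ← sum_mul]
  ring

theorem spiking_limit_is_unique_minimizer_general
    (k : ℕ) (c : Fin k → ℝ) (lam1 lam2 : ℝ)
    (M : Matrix (Fin k) (Fin k) ℝ)
    (hpd : (M + lam2 • (1 : Matrix (Fin k) (Fin k) ℝ)).PosDef)
    (h : (Fin k → ℝ) → ℝ)
    (hh : ∀ y, h y = -2 * (∑ i, y i * c i) + (∑ i, y i * ∑ j, M i j * y j)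
        + 2 * lam1 * (∑ i, |y i|) + lam2 * (∑ i, (y i) ^ 2))
    (ystar : Fin k → ℝ) (hy : ∀ i, 0 ≤ ystar i)
    (hcond : ∀ i,
      (ystar i = 0 ∧ c i - (∑ j ∈ univ \ {i}, M i j * ystar j) - lam1 ≤ 0) ∨
      (0 < ystar i ∧ ystar i =
        (c i - (∑ j ∈ univ \ {i}, M i j * ystar j) - lam1) / (lam2 + M i i))) :
    (∀ y : Fin k → ℝ, (∀ i, 0 ≤ y i) → h ystar ≤ h y) ∧
      (∀ y : Fin k → ℝ, (∀ i, 0 ≤ y i) → h y ≤ h ystar → y = ystar) := by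
  set A := M + lam2 • (1 : Matrix (Fin k) (Fin k) ℝ)
  set s : Fin k → ℝ := c - fun _ => lam1
  have hkkt i : s i ≤ (A *ᵥ ystar) i ∧ ystar i * ((A *ᵥ ystar) i - s i) = 0 := by
    have hdiag : 0 < lam2 + M i i := by simpa [A, add_comm] using hpd.diag_pos (i := i)
    rw [add_smul_one_mulVec_apply]
    exact le_and_mul_eq_zero_of_fixed_point hdiag (hcond i)
  have hlt : ∀ y : Fin k → ℝ, (∀ i, 0 ≤ y i) → y ≠ ystar → h ystar < h y := by
    intro y hy' hne
    rw [hh, hh, elastic_net_objective_eq_of_nonneg c lam1 lam2 M hy,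
      elastic_net_objective_eq_of_nonneg c lam1 lam2 M hy']
    exact hpd.quadratic_lt_of_complementarity (fun i => (hkkt i).1)
      (sum_eq_zero fun i _ => (hkkt i).2) hy' hne
  refine ⟨fun y hy' => ?_, fun y hy' hle => ?_⟩
  · rcases eq_or_ne y ystar with rfl | hne
    · exact le_rfl
    · exact (hlt y hy' hne).le
  · by_contra hne
    exact (hlt y hy' hne).not_ge hle

/-- If the limit `y* ≥ 0` of the time-averaged spike trains satisfies, for
each `i`, either `y*_i = 0` and `c_i - (M̄ y*)_i - λ₁ ≤ 0`, or `y*_i > 0` and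
`y*_i = (c_i - (M̄ y*)_i - λ₁)/(λ₂ + M_ii)`, and if `M + λ₂ I` is positive definite,
then `y*` is the unique global minimizer of
`h(y) = -2 yᵀc + yᵀMy + 2λ₁‖y‖₁ + λ₂‖y‖₂²` over the nonnegative orthant. -/
theorem spiking_limit_is_unique_minimizer
    (k : ℕ) (c : Fin k → ℝ) (lam1 lam2 : ℝ)
    (hlam1 : 0 ≤ lam1) (hlam2 : 0 ≤ lam2)
    (M : Matrix (Fin k) (Fin k) ℝ) (hMsymm : Mᵀ = M)
    (hpd : (M + lam2 • (1 : Matrix (Fin k) (Fin k) ℝ)).PosDef)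
    (h : (Fin k → ℝ) → ℝ)
    (hh : ∀ y, h y = -2 * (∑ i, y i * c i) + (∑ i, y i * ∑ j, M i j * y j)
        + 2 * lam1 * (∑ i, |y i|) + lam2 * (∑ i, (y i) ^ 2))
    (ystar : Fin k → ℝ) (hy : ∀ i, 0 ≤ ystar i)
    (hcond : ∀ i,
      (ystar i = 0 ∧ c i - (∑ j ∈ univ \ {i}, M i j * ystar j) - lam1 ≤ 0) ∨
      (0 < ystar i ∧ ystar i =
        (c i - (∑ j ∈ univ \ {i}, M i j * ystar j) - lam1) / (lam2 + M i i))) :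
    (∀ y : Fin k → ℝ, (∀ i, 0 ≤ y i) → h ystar ≤ h y) ∧
      (∀ y : Fin k → ℝ, (∀ i, 0 ≤ y i) → h y ≤ h ystar → y = ystar) :=
  spiking_limit_is_unique_minimizer_general k c lam1 lam2 M hpd h hh ystar hy hcond
end
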